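/- arXiv:2111.06297 — 4 statements merged into one kernel-verified Lean document; each statement's English description precedes it below -/
import Mathlib

section
/- Discrete Copson-type lower bound: let σ > 0, q > 0, and (a_j)_{j∈ℤ} a nonnegative sequence with Σ_j a_j^p < ∞ for some p > 0. Then (Σ_{l∈ℤ} (2^{-lσ q} Σ_{j≤l} 2^{jσ q} a_j^q)^{p/q})^{1/p} ≥ c σ^{-1/q} (Σ_l a_l^p)^{1/p} when p < q, where c > 0 depends only on p and q. -/
/-!
For `N = ⌊1/(σq)⌋` the weight `2^((j-l)σq)` is at least `1/2` on the window `l - N ≤ j ≤ l`,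
so the `l`-th Copson term dominates half the window sum of the `a_j^q`. As `p/q ≤ 1`, the reverse
power-mean inequality bounds `(N+1)^(p/q-1) · Σ_window a_j^p` by the `p/q`-th power of that window
sum, and summing over `l` counts every `a_j^p` exactly `N + 1` times. This gives the constant
`((N+1)/2)^(1/q) ≥ (2qσ)^(-1/q)`.
-/

open scoped ENNReal

open Finset

theorem ENNReal.card_rpow_sub_one_mul_sum_rpow_le {ι : Type*} (s : Finset ι) (x : ι → ℝ≥0∞)
    {r : ℝ} (hr0 : 0 < r) (hr1 : r ≤ 1) :
    (#s : ℝ≥0∞) ^ (r - 1) * ∑ i ∈ s, x i ^ r ≤ (∑ i ∈ s, x i) ^ r := by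
  rcases s.eq_empty_or_nonempty with rfl | hs
  · simp
  have hcard0 : (#s : ℝ≥0∞) ≠ 0 := by simpa using hs.card_pos.ne'
  have hcard : (#s : ℝ≥0∞) ≠ ⊤ := ENNReal.natCast_ne_top _
  have hpow := ENNReal.rpow_sum_le_const_mul_sum_rpow s (fun i => x i ^ r)
    (one_le_one_div hr0 hr1)
  simp only [← ENNReal.rpow_mul, mul_one_div_cancel hr0.ne', ENNReal.rpow_one] at hpow
  calc (#s : ℝ≥0∞) ^ (r - 1) * ∑ i ∈ s, x i ^ r
      = (#s : ℝ≥0∞) ^ (r - 1) * ((∑ i ∈ s, x i ^ r) ^ (1 / r)) ^ r := by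
        rw [← ENNReal.rpow_mul, one_div_mul_cancel hr0.ne', ENNReal.rpow_one]
    _ ≤ (#s : ℝ≥0∞) ^ (r - 1) * ((#s : ℝ≥0∞) ^ (1 / r - 1) * ∑ i ∈ s, x i) ^ r := by
        gcongr
    _ = (∑ i ∈ s, x i) ^ r := by
        rw [ENNReal.mul_rpow_of_nonneg _ _ hr0.le, ← ENNReal.rpow_mul, ← mul_assoc,
          ← ENNReal.rpow_add _ _ hcard0 hcard]
        have : r - 1 + (1 / r - 1) * r = 0 := by field_simp; ring
        rw [this, ENNReal.rpow_zero, one_mul]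

theorem ENNReal.tsum_sum_range_sub (f : ℤ → ℝ≥0∞) (n : ℕ) :
    ∑' l : ℤ, ∑ k ∈ range n, f (l - k) = n * ∑' l, f l := by
  rw [Summable.tsum_finsetSum fun _ _ => ENNReal.summable]
  have hshift (k : ℕ) : ∑' l : ℤ, f (l - k) = ∑' l, f l := (Equiv.subRight (k : ℤ)).tsum_eq f
  simp [hshift]

theorem ENNReal.sum_range_le_tsum_sub (g : ℤ → ℝ≥0∞) (l : ℤ) (n : ℕ) :
    ∑ k ∈ range n, g (l - k) ≤ ∑' j, g j :=
  (ENNReal.sum_le_tsum _).trans <|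
    ENNReal.tsum_comp_le_tsum_of_injective (fun _ _ h => by simpa using h) g

theorem ENNReal.ofReal_two_rpow_rpow (x q : ℝ) :
    ENNReal.ofReal ((2 : ℝ) ^ x) ^ q = ENNReal.ofReal ((2 : ℝ) ^ (x * q)) := by
  rw [ENNReal.ofReal_rpow_of_pos (by positivity), Real.rpow_mul zero_le_two]

noncomputable def copsonTerm (σ q : ℝ) (a : ℤ → ℝ≥0∞) (l : ℤ) : ℝ≥0∞ :=
  ENNReal.ofReal ((2 : ℝ) ^ (-(l : ℝ) * σ)) ^ q *
    ∑' j : ℤ, if j ≤ l then ENNReal.ofReal ((2 : ℝ) ^ ((j : ℝ) * σ)) ^ q * a j ^ q else 0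

theorem half_le_two_rpow_neg {t : ℝ} (ht : t ≤ 1) : (2⁻¹ : ℝ) ≤ 2 ^ (-t) := by
  rw [← Real.rpow_neg_one]
  exact Real.rpow_le_rpow_of_exponent_le one_le_two (by linarith)

theorem half_mul_sum_range_le_copsonTerm {σ q : ℝ} (hσq : 0 ≤ σ * q) {N : ℕ}
    (hN : N * (σ * q) ≤ 1) (a : ℤ → ℝ≥0∞) (l : ℤ) :
    2⁻¹ * ∑ k ∈ range (N + 1), a (l - k) ^ q ≤ copsonTerm σ q a l := by
  set g : ℤ → ℝ≥0∞ := fun j =>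
    if j ≤ l then ENNReal.ofReal ((2 : ℝ) ^ ((j : ℝ) * σ)) ^ q * a j ^ q else 0
  have hweight (k : ℕ) (hk : k ∈ range (N + 1)) :
      (2⁻¹ : ℝ≥0∞) ≤ ENNReal.ofReal ((2 : ℝ) ^ (-(l : ℝ) * σ)) ^ q *
        ENNReal.ofReal ((2 : ℝ) ^ (((l - k : ℤ) : ℝ) * σ)) ^ q := by
    have hkN : (k : ℝ) ≤ N := by exact_mod_cast Nat.lt_succ_iff.mp (mem_range.mp hk)
    rw [ENNReal.ofReal_two_rpow_rpow, ENNReal.ofReal_two_rpow_rpow,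
      ← ENNReal.ofReal_mul (by positivity), ← Real.rpow_add two_pos,
      ← ENNReal.ofReal_ofNat 2, ← ENNReal.ofReal_inv_of_pos two_pos]
    refine ENNReal.ofReal_le_ofReal ?_
    convert half_le_two_rpow_neg (t := k * (σ * q)) (by nlinarith) using 2
    push_cast
    ring
  calc 2⁻¹ * ∑ k ∈ range (N + 1), a (l - k) ^ q
      ≤ ∑ k ∈ range (N + 1), ENNReal.ofReal ((2 : ℝ) ^ (-(l : ℝ) * σ)) ^ q * g (l - k) := by
        rw [mul_sum]
        refine sum_le_sum fun k hk => ?_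
        simp only [g, if_pos (show l - (k : ℤ) ≤ l by omega), ← mul_assoc]
        exact mul_le_mul_left (hweight k hk) _
    _ ≤ copsonTerm σ q a l := by
        rw [← mul_sum]
        exact mul_le_mul_right (ENNReal.sum_range_le_tsum_sub g l _) _

theorem half_succ_rpow_mul_tsum_le_tsum_copsonTerm_rpow {p q σ : ℝ} (hp : 0 < p) (hpq : p ≤ q)
    (hσq : 0 ≤ σ * q) {N : ℕ} (hN : N * (σ * q) ≤ 1) (a : ℤ → ℝ≥0∞) :
    (2⁻¹ * (N + 1 : ℝ≥0∞)) ^ (p / q) * ∑' l, a l ^ p ≤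
      ∑' l, copsonTerm σ q a l ^ (p / q) := by
  have hq : 0 < q := hp.trans_le hpq
  set r := p / q with hr
  have hr0 : 0 < r := div_pos hp hq
  have hM0 : (N + 1 : ℝ≥0∞) ≠ 0 := by positivity
  have hMt : (N + 1 : ℝ≥0∞) ≠ ⊤ := by finiteness
  have hpow (j : ℤ) : (a j ^ q) ^ r = a j ^ p := by
    rw [← ENNReal.rpow_mul, hr, mul_div_cancel₀ _ hq.ne']
  have hjensen (l : ℤ) := ENNReal.card_rpow_sub_one_mul_sum_rpow_le (range (N + 1))
    (fun k => a (l - k) ^ q) hr0 (div_le_one_of_le₀ hpq hq.le)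
  simp only [card_range, Nat.cast_add, Nat.cast_one, hpow] at hjensen
  calc (2⁻¹ * (N + 1 : ℝ≥0∞)) ^ r * ∑' l, a l ^ p
      = ∑' l, 2⁻¹ ^ r * ((N + 1 : ℝ≥0∞) ^ (r - 1) * ∑ k ∈ range (N + 1), a (l - k) ^ p) := by
        rw [ENNReal.tsum_mul_left, ENNReal.tsum_mul_left, ENNReal.tsum_sum_range_sub (fun j => a j ^ p),
          ENNReal.mul_rpow_of_nonneg _ _ hr0.le, ← mul_assoc _ (_ : ℝ≥0∞), Nat.cast_add,
          Nat.cast_one]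
        have hMr : (N + 1 : ℝ≥0∞) ^ r = (N + 1 : ℝ≥0∞) ^ (r - 1) * (N + 1) := by
          conv_lhs => rw [← sub_add_cancel r 1, ENNReal.rpow_add _ _ hM0 hMt, ENNReal.rpow_one]
        rw [hMr]
        ring
    _ ≤ ∑' l, (2⁻¹ * ∑ k ∈ range (N + 1), a (l - k) ^ q) ^ r := by
        refine ENNReal.tsum_le_tsum fun l => ?_
        rw [ENNReal.mul_rpow_of_nonneg _ _ hr0.le]
        gcongr
        exact hjensen l
    _ ≤ ∑' l, copsonTerm σ q a l ^ r := by
        gcongr with l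
        exact half_mul_sum_range_le_copsonTerm hσq hN a l

theorem exists_nat_mul_le_one_le_succ_mul {t : ℝ} (ht : 0 < t) :
    ∃ N : ℕ, N * t ≤ 1 ∧ 1 ≤ (N + 1) * t := by
  refine ⟨⌊t⁻¹⌋₊, ?_, ?_⟩
  · simpa [← le_div_iff₀ ht] using Nat.floor_le (inv_nonneg.mpr ht.le)
  · simpa [← div_le_iff₀ ht] using (Nat.lt_floor_add_one t⁻¹).le

theorem ofReal_rpow_mul_rpow_le_half_succ_rpow {σ q : ℝ} (hσ : 0 < σ) (hq : 0 < q) {N : ℕ}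
    (hN : 1 ≤ (N + 1) * (σ * q)) :
    ENNReal.ofReal ((2 * q) ^ (-(1 / q)) * σ ^ (-(1 / q))) ≤
      (2⁻¹ * (N + 1 : ℝ≥0∞)) ^ (1 / q) := by
  have hhalf : 2⁻¹ * (N + 1 : ℝ≥0∞) = ENNReal.ofReal (2⁻¹ * (N + 1)) := by
    rw [ENNReal.ofReal_mul (by norm_num), ENNReal.ofReal_inv_of_pos two_pos]
    norm_cast
  rw [hhalf, ENNReal.ofReal_rpow_of_nonneg (by positivity) (by positivity),
    ← Real.mul_rpow (by positivity) hσ.le, Real.rpow_neg (by positivity),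
    ← Real.inv_rpow (by positivity)]
  refine ENNReal.ofReal_le_ofReal (Real.rpow_le_rpow (by positivity) ?_ (by positivity))
  rw [inv_le_iff_one_le_mul₀ (by positivity)]
  linarith

/-- Discrete Copson-type lower bound: for `σ > 0`, `0 < p < q`, and a nonnegative sequence
`(a_j)_{j∈ℤ}` (modeled with values in `[0,∞]`) with `Σ_j a_j^p < ∞`,
`(Σ_l (2^{-lσq} Σ_{j≤l} 2^{jσq} a_j^q)^{p/q})^{1/p} ≥ c σ^{-1/q} (Σ_l a_l^p)^{1/p}`,
with `c > 0` depending only on `p` and `q`. -/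
theorem stmt7 (p q : ℝ) (hp : 0 < p) (hpq : p < q) :
    ∃ c : ℝ, 0 < c ∧
      ∀ σ : ℝ, 0 < σ → ∀ a : ℤ → ℝ≥0∞, (∑' j : ℤ, a j ^ p) ≠ ⊤ →
        ENNReal.ofReal (c * σ ^ (-(1 / q))) * (∑' l : ℤ, a l ^ p) ^ (1 / p) ≤
          (∑' l : ℤ,
              ((ENNReal.ofReal ((2 : ℝ) ^ (-(l : ℝ) * σ))) ^ q *
                  ∑' j : ℤ,
                    if j ≤ l then (ENNReal.ofReal ((2 : ℝ) ^ ((j : ℝ) * σ))) ^ q * a j ^ q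
                    else 0) ^ (p / q)) ^ (1 / p) := by
  have hq : 0 < q := hp.trans hpq
  refine ⟨(2 * q) ^ (-(1 / q)), by positivity, fun σ hσ a _ => ?_⟩
  obtain ⟨N, hN, hN'⟩ := exists_nat_mul_le_one_le_succ_mul (mul_pos hσ hq)
  calc ENNReal.ofReal ((2 * q) ^ (-(1 / q)) * σ ^ (-(1 / q))) * (∑' l : ℤ, a l ^ p) ^ (1 / p)
      ≤ (2⁻¹ * (N + 1 : ℝ≥0∞)) ^ (1 / q) * (∑' l : ℤ, a l ^ p) ^ (1 / p) := by
        gcongr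
        exact ofReal_rpow_mul_rpow_le_half_succ_rpow hσ hq hN'
    _ = ((2⁻¹ * (N + 1 : ℝ≥0∞)) ^ (p / q) * ∑' l : ℤ, a l ^ p) ^ (1 / p) := by
        rw [ENNReal.mul_rpow_of_nonneg _ (∑' l : ℤ, a l ^ p) (by positivity : 0 ≤ 1 / p),
          ← ENNReal.rpow_mul]
        congr 2
        field_simp
    _ ≤ (∑' l, copsonTerm σ q a l ^ (p / q)) ^ (1 / p) := by
        gcongr
        exact half_succ_rpow_mul_tsum_le_tsum_copsonTerm_rpow hp hpq.le (by positivity) hN a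
end

section
/- Limit of normalized interpolation norms at θ → 1⁻: let p > 0 and f ∈ A₀ ∩ A₁. Then lim_{θ→1⁻} (θ(1-θ)p)^{1/p} (∫₀^∞ (t^{-θ}K(t,f))^p dt/t)^{1/p} = sup_{t>0} K(t,f)/t. -/
open scoped ENNReal

/-- The K-functional of a compatible pair of (quasi-)seminormed spaces. -/
noncomputable def KfunE {V : Type*} [AddCommGroup V] (N0 N1 : V → ℝ≥0∞) (t : ℝ) (f : V) : ℝ≥0∞ :=
  ⨅ (f0 : V) (f1 : V) (_ : f = f0 + f1), N0 f0 + ENNReal.ofReal t * N1 f1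

/-- The real interpolation (quasi-)norm. -/
noncomputable def interpNormE {V : Type*} [AddCommGroup V] (N0 N1 : V → ℝ≥0∞) (θ p : ℝ)
    (f : V) : ℝ≥0∞ :=
  (∫⁻ t in Set.Ioi (0 : ℝ),
      (ENNReal.ofReal (t ^ (-θ)) * KfunE N0 N1 t f) ^ p / ENNReal.ofReal t) ^ (1 / p)

/-!
With `S = sup_{t>0} K(t)/t`, the `p`-th power of the normalized norm is
`Φ(θ) = θ(1-θ)p ∫₀^∞ K(t)^p t^{-θp-1} dt`. Splitting at `t = 1` and using `K(t) ≤ tS` on `(0,1]`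
and `K(t) ≤ ‖f‖_{A₀}` on `(1,∞)` gives `Φ(θ) ≤ θ S^p + (1-θ) ‖f‖_{A₀}^p`. Conversely, since
`K(t)/t` is nonincreasing, `K(t) ≥ t K(t₀)/t₀` on `(0,t₀]`, whence
`Φ(θ) ≥ θ t₀^{(1-θ)p} (K(t₀)/t₀)^p`. As `θ → 1⁻` the upper bound tends to `S^p` and the lower
one to `(K(t₀)/t₀)^p`, whose supremum over `t₀` is again `S^p`.
-/

open MeasureTheory Set Filter
open scoped Topology

section KFunctional

variable {V : Type*} [AddCommGroup V] (N0 N1 : V → ℝ≥0∞) (f : V)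

lemma KfunE_le_of_eq_add (t : ℝ) {f0 f1 : V} (h : f = f0 + f1) :
    KfunE N0 N1 t f ≤ N0 f0 + ENNReal.ofReal t * N1 f1 :=
  iInf₂_le_of_le f0 f1 (iInf_le_of_le h le_rfl)

lemma KfunE_le_left (hN10 : N1 0 = 0) (t : ℝ) : KfunE N0 N1 t f ≤ N0 f := by
  simpa [hN10] using KfunE_le_of_eq_add N0 N1 f t (add_zero f).symm

lemma KfunE_le_mul_KfunE {s t : ℝ} (hs : 0 < s) (hst : s ≤ t) :
    KfunE N0 N1 t f ≤ ENNReal.ofReal (t / s) * KfunE N0 N1 s f := by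
  have hts : 0 < t / s := div_pos (hs.trans_le hst) hs
  have hone : 1 ≤ ENNReal.ofReal (t / s) := by
    simpa using ENNReal.ofReal_le_ofReal ((one_le_div hs).2 hst)
  conv_rhs => rw [KfunE]
  simp_rw [ENNReal.mul_iInf_of_ne (by simpa using hts) ENNReal.ofReal_ne_top]
  refine le_iInf₂ fun f0 f1 => le_iInf fun h => ?_
  calc KfunE N0 N1 t f ≤ N0 f0 + ENNReal.ofReal t * N1 f1 := KfunE_le_of_eq_add N0 N1 f t h
    _ ≤ ENNReal.ofReal (t / s) * N0 f0 + (ENNReal.ofReal (t / s) * ENNReal.ofReal s) * N1 f1 := by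
        gcongr
        · exact le_mul_of_one_le_left' hone
        · rw [← ENNReal.ofReal_mul hts.le, div_mul_cancel₀ _ hs.ne']
    _ = ENNReal.ofReal (t / s) * (N0 f0 + ENNReal.ofReal s * N1 f1) := by ring

lemma KfunE_div_le_KfunE_div {s t : ℝ} (hs : 0 < s) (hst : s ≤ t) :
    KfunE N0 N1 t f / ENNReal.ofReal t ≤ KfunE N0 N1 s f / ENNReal.ofReal s := by
  have ht : 0 < t := hs.trans_le hst
  rw [ENNReal.div_le_iff (by simpa using ht) ENNReal.ofReal_ne_top]
  calc KfunE N0 N1 t f ≤ ENNReal.ofReal (t / s) * KfunE N0 N1 s f :=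
        KfunE_le_mul_KfunE N0 N1 f hs hst
    _ = KfunE N0 N1 s f / ENNReal.ofReal s * ENNReal.ofReal t := by
        rw [ENNReal.ofReal_div_of_pos hs, div_eq_mul_inv, div_eq_mul_inv]
        ring

end KFunctional

lemma lintegral_Ioc_zero_rpow {a c : ℝ} (ha : 0 < a) (hc : 0 < c) :
    ∫⁻ t in Ioc 0 c, ENNReal.ofReal (t ^ (a - 1)) = ENNReal.ofReal (c ^ a / a) := by
  have hint : IntegrableOn (fun t : ℝ => t ^ (a - 1)) (Ioc 0 c) := by
    rw [← intervalIntegrable_iff_integrableOn_Ioc_of_le hc.le]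
    exact intervalIntegral.intervalIntegrable_rpow' (by linarith)
  rw [← ofReal_integral_eq_lintegral_ofReal hint
    ((ae_restrict_iff' measurableSet_Ioc).2 (.of_forall fun t ht => by positivity [ht.1.le])),
    ← intervalIntegral.integral_of_le hc.le, integral_rpow (.inl (by linarith)),
    Real.zero_rpow (by linarith), sub_add_cancel, sub_zero]

lemma lintegral_Ioi_rpow_neg {a c : ℝ} (ha : 0 < a) (hc : 0 < c) :
    ∫⁻ t in Ioi c, ENNReal.ofReal (t ^ (-a - 1)) = ENNReal.ofReal (c ^ (-a) / a) := by
  rw [← ofReal_integral_eq_lintegral_ofReal (integrableOn_Ioi_rpow_of_lt (by linarith) hc)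
    ((ae_restrict_iff' measurableSet_Ioi).2 (.of_forall fun t ht => by
      positivity [(hc.trans ht).le])),
    integral_Ioi_rpow_of_lt (by linarith) hc, sub_add_cancel, neg_div, div_neg, neg_neg]

lemma ofReal_rpow_mul_rpow_mul_ofReal_rpow {t p : ℝ} (ht : 0 < t) (hp : 0 ≤ p) (x : ℝ≥0∞)
    (a b : ℝ) :
    (ENNReal.ofReal (t ^ b) * x) ^ p * ENNReal.ofReal (t ^ a)
      = x ^ p * ENNReal.ofReal (t ^ (b * p + a)) := by
  rw [ENNReal.mul_rpow_of_nonneg _ _ hp, ENNReal.ofReal_rpow_of_pos (by positivity),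
    ← Real.rpow_mul ht.le, mul_comm (ENNReal.ofReal _) (x ^ p), mul_assoc,
    ← ENNReal.ofReal_mul (by positivity), ← Real.rpow_add ht]

section WeightedIntegral

variable {K : ℝ → ℝ≥0∞} {p θ : ℝ}

lemma mul_lintegral_rpow_le (hp : 0 < p) (hθ : θ ∈ Ioo 0 1) {S M : ℝ≥0∞}
    (hS : ∀ t ∈ Ioc 0 1, K t ≤ ENNReal.ofReal t * S) (hM : ∀ t ∈ Ioi 1, K t ≤ M) :
    ENNReal.ofReal (θ * (1 - θ) * p) *
        ∫⁻ t in Ioi 0, K t ^ p * ENNReal.ofReal (t ^ (-(θ * p) - 1))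
      ≤ ENNReal.ofReal θ * S ^ p + ENNReal.ofReal (1 - θ) * M ^ p := by
  obtain ⟨hθ0, hθ1⟩ := hθ
  have h1θ : 0 < 1 - θ := sub_pos.2 hθ1
  have hnear : ∫⁻ t in Ioc 0 1, K t ^ p * ENNReal.ofReal (t ^ (-(θ * p) - 1))
      ≤ S ^ p * ENNReal.ofReal (1 / ((1 - θ) * p)) := calc
    _ ≤ ∫⁻ t in Ioc 0 1, S ^ p * ENNReal.ofReal (t ^ ((1 - θ) * p - 1)) :=
        setLIntegral_mono (by fun_prop) fun t ht => by
          calc K t ^ p * ENNReal.ofReal (t ^ (-(θ * p) - 1))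
              ≤ (ENNReal.ofReal (t ^ (1 : ℝ)) * S) ^ p * ENNReal.ofReal (t ^ (-(θ * p) - 1)) := by
                rw [Real.rpow_one]
                gcongr
                exact hS t ht
            _ = _ := by
                rw [ofReal_rpow_mul_rpow_mul_ofReal_rpow ht.1 hp.le]
                ring_nf
    _ = _ := by
        rw [lintegral_const_mul _ (by fun_prop),
          lintegral_Ioc_zero_rpow (by positivity) one_pos, Real.one_rpow]
  have hfar : ∫⁻ t in Ioi 1, K t ^ p * ENNReal.ofReal (t ^ (-(θ * p) - 1))
      ≤ M ^ p * ENNReal.ofReal (1 / (θ * p)) := calc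
    _ ≤ ∫⁻ t in Ioi 1, M ^ p * ENNReal.ofReal (t ^ (-(θ * p) - 1)) :=
        setLIntegral_mono (by fun_prop) fun t ht => by
          gcongr
          exact hM t ht
    _ = _ := by
        rw [lintegral_const_mul _ (by fun_prop),
          lintegral_Ioi_rpow_neg (by positivity) one_pos, Real.one_rpow]
  rw [← Ioc_union_Ioi_eq_Ioi zero_le_one,
    lintegral_union measurableSet_Ioi (Ioc_disjoint_Ioi le_rfl)]
  calc _ ≤ ENNReal.ofReal (θ * (1 - θ) * p) * (S ^ p * ENNReal.ofReal (1 / ((1 - θ) * p))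
          + M ^ p * ENNReal.ofReal (1 / (θ * p))) := by gcongr
    _ = _ := by
        rw [mul_add, mul_left_comm, ← ENNReal.ofReal_mul (by positivity), mul_left_comm,
          ← ENNReal.ofReal_mul (by positivity), mul_comm _ (S ^ p), mul_comm _ (M ^ p)]
        congr 3 <;> field_simp

lemma le_mul_lintegral_rpow (hp : 0 < p) (hθ : θ ∈ Ioo 0 1) {t₀ : ℝ} (ht₀ : 0 < t₀)
    {C : ℝ≥0∞} (hC : ∀ t ∈ Ioc 0 t₀, ENNReal.ofReal t * C ≤ K t) :
    ENNReal.ofReal (θ * t₀ ^ ((1 - θ) * p)) * C ^ p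
      ≤ ENNReal.ofReal (θ * (1 - θ) * p) *
        ∫⁻ t in Ioi 0, K t ^ p * ENNReal.ofReal (t ^ (-(θ * p) - 1)) := by
  obtain ⟨hθ0, hθ1⟩ := hθ
  have h1θ : 0 < 1 - θ := sub_pos.2 hθ1
  have hnear : C ^ p * ENNReal.ofReal (t₀ ^ ((1 - θ) * p) / ((1 - θ) * p))
      ≤ ∫⁻ t in Ioi 0, K t ^ p * ENNReal.ofReal (t ^ (-(θ * p) - 1)) := calc
    _ = ∫⁻ t in Ioc 0 t₀,
          (ENNReal.ofReal (t ^ (1 : ℝ)) * C) ^ p * ENNReal.ofReal (t ^ (-(θ * p) - 1)) := by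
        rw [← lintegral_Ioc_zero_rpow (by positivity) ht₀, ← lintegral_const_mul _ (by fun_prop)]
        refine setLIntegral_congr_fun measurableSet_Ioc fun t ht => ?_
        rw [ofReal_rpow_mul_rpow_mul_ofReal_rpow ht.1 hp.le]
        ring_nf
    _ ≤ ∫⁻ t in Ioc 0 t₀, K t ^ p * ENNReal.ofReal (t ^ (-(θ * p) - 1)) :=
        setLIntegral_mono' measurableSet_Ioc fun t ht => by
          rw [Real.rpow_one]
          gcongr
          exact hC t ht
    _ ≤ _ := lintegral_mono_set Ioc_subset_Ioi_self
  calc _ = ENNReal.ofReal (θ * (1 - θ) * p) *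
        (C ^ p * ENNReal.ofReal (t₀ ^ ((1 - θ) * p) / ((1 - θ) * p))) := by
        rw [mul_left_comm, ← ENNReal.ofReal_mul (by positivity), mul_comm]
        congr 2
        field_simp
    _ ≤ _ := by gcongr

end WeightedIntegral

lemma tendsto_ofReal_mul_rpow_nhdsLT_one {t₀ p : ℝ} (ht₀ : 0 < t₀) (x : ℝ≥0∞) :
    Tendsto (fun θ : ℝ => ENNReal.ofReal (θ * t₀ ^ ((1 - θ) * p)) * x) (𝓝[<] 1) (𝓝 x) := by
  have hcont : Continuous fun θ : ℝ => ENNReal.ofReal (θ * t₀ ^ ((1 - θ) * p)) :=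
    ENNReal.continuous_ofReal.comp (by simp only [Real.rpow_def_of_pos ht₀]; fun_prop)
  have hone : Tendsto (fun θ : ℝ => ENNReal.ofReal (θ * t₀ ^ ((1 - θ) * p))) (𝓝[<] 1) (𝓝 1) := by
    simpa using (hcont.tendsto 1).mono_left nhdsWithin_le_nhds
  simpa using ENNReal.Tendsto.mul_const hone (.inl one_ne_zero)

lemma tendsto_ofReal_mul_add_ofReal_sub_mul_nhdsLT_one {M : ℝ≥0∞} (hM : M ≠ ⊤) (x : ℝ≥0∞) :
    Tendsto (fun θ : ℝ => ENNReal.ofReal θ * x + ENNReal.ofReal (1 - θ) * M)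
      (𝓝[<] 1) (𝓝 x) := by
  have hθ : Tendsto (fun θ : ℝ => ENNReal.ofReal θ) (𝓝[<] 1) (𝓝 1) := by
    simpa using (ENNReal.continuous_ofReal.tendsto 1).mono_left nhdsWithin_le_nhds
  have h1θ : Tendsto (fun θ : ℝ => ENNReal.ofReal (1 - θ)) (𝓝[<] 1) (𝓝 0) := by
    have hcont : Continuous fun θ : ℝ => ENNReal.ofReal (1 - θ) :=
      ENNReal.continuous_ofReal.comp (by fun_prop)
    simpa using (hcont.tendsto 1).mono_left nhdsWithin_le_nhds
  simpa using (ENNReal.Tendsto.mul_const hθ (.inl one_ne_zero)).add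
    (ENNReal.Tendsto.mul_const h1θ (.inr hM))

theorem tendsto_mul_lintegral_rpow_nhdsLT_one {K : ℝ → ℝ≥0∞} {p : ℝ} (hp : 0 < p)
    (hanti : ∀ ⦃s t : ℝ⦄, 0 < s → s ≤ t → K t / ENNReal.ofReal t ≤ K s / ENNReal.ofReal s)
    {M : ℝ≥0∞} (hM : M ≠ ⊤) (hKM : ∀ t ∈ Ioi 1, K t ≤ M) :
    Tendsto (fun θ : ℝ => ENNReal.ofReal (θ * (1 - θ) * p) *
        ∫⁻ t in Ioi 0, K t ^ p * ENNReal.ofReal (t ^ (-(θ * p) - 1)))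
      (𝓝[<] 1) (𝓝 ((⨆ t ∈ Ioi (0 : ℝ), K t / ENNReal.ofReal t) ^ p)) := by
  set S := ⨆ t ∈ Ioi (0 : ℝ), K t / ENNReal.ofReal t
  have hθ : ∀ᶠ θ in 𝓝[<] (1 : ℝ), θ ∈ Ioo 0 1 := Ioo_mem_nhdsLT one_pos
  refine tendsto_of_le_liminf_of_limsup_le ?_ ?_
  · rw [show S ^ p = ⨆ t ∈ Ioi (0 : ℝ), (K t / ENNReal.ofReal t) ^ p from
      (ENNReal.orderIsoRpow p hp).map_iSup₂ _]
    refine iSup₂_le fun t₀ ht₀ => ?_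
    have hC : ∀ t ∈ Ioc 0 t₀, ENNReal.ofReal t * (K t₀ / ENNReal.ofReal t₀) ≤ K t :=
      fun t ht => by
        rw [mul_comm, ← ENNReal.le_div_iff_mul_le (.inl (by simpa using ht.1)) (.inl (by simp))]
        exact hanti ht.1 ht.2
    rw [← (tendsto_ofReal_mul_rpow_nhdsLT_one (p := p) ht₀
      ((K t₀ / ENNReal.ofReal t₀) ^ p)).liminf_eq]
    exact liminf_le_liminf (hθ.mono fun θ hθ => le_mul_lintegral_rpow hp hθ ht₀ hC)
  · have hS : ∀ t ∈ Ioc (0 : ℝ) 1, K t ≤ ENNReal.ofReal t * S := fun t ht => by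
      rw [mul_comm, ← ENNReal.div_le_iff (by simpa using ht.1) ENNReal.ofReal_ne_top]
      exact le_biSup (fun t => K t / ENNReal.ofReal t) ht.1
    rw [← (tendsto_ofReal_mul_add_ofReal_sub_mul_nhdsLT_one
      (ENNReal.rpow_ne_top_of_nonneg hp.le hM) (S ^ p)).limsup_eq]
    exact limsup_le_limsup (hθ.mono fun θ hθ => mul_lintegral_rpow_le hp hθ hS hKM)

lemma ofReal_rpow_mul_interpNormE {V : Type*} [AddCommGroup V] (N0 N1 : V → ℝ≥0∞) (f : V)
    {θ p c : ℝ} (hp : 0 < p) (hc : 0 ≤ c) :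
    ENNReal.ofReal (c ^ (1 / p)) * interpNormE N0 N1 θ p f
      = (ENNReal.ofReal c *
          ∫⁻ t in Ioi 0, KfunE N0 N1 t f ^ p * ENNReal.ofReal (t ^ (-(θ * p) - 1))) ^ (1 / p) := by
  rw [interpNormE, ← ENNReal.ofReal_rpow_of_nonneg hc (by positivity),
    ← ENNReal.mul_rpow_of_nonneg _ _ (by positivity)]
  congr 2
  refine setLIntegral_congr_fun measurableSet_Ioi fun t ht => ?_
  rw [div_eq_mul_inv, ← ENNReal.ofReal_inv_of_pos ht, ← Real.rpow_neg_one,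
    ofReal_rpow_mul_rpow_mul_ofReal_rpow ht hp.le]
  ring_nf

theorem stmt9_general {V : Type*} [AddCommGroup V] (N0 N1 : V → ℝ≥0∞)
    (hN10 : N1 0 = 0) (p : ℝ) (hp : 0 < p) (f : V) (hf0 : N0 f ≠ ⊤) :
    Filter.Tendsto
      (fun θ : ℝ => ENNReal.ofReal ((θ * (1 - θ) * p) ^ (1 / p)) * interpNormE N0 N1 θ p f)
      (nhdsWithin 1 (Set.Iio 1))
      (nhds (⨆ t ∈ Set.Ioi (0 : ℝ), KfunE N0 N1 t f / ENNReal.ofReal t)) := by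
  have hpow := tendsto_mul_lintegral_rpow_nhdsLT_one (K := fun t => KfunE N0 N1 t f) hp
    (fun _ _ hs hst => KfunE_div_le_KfunE_div N0 N1 f hs hst) hf0
    (fun t _ => KfunE_le_left N0 N1 f hN10 t)
  have hlim := ((ENNReal.continuous_rpow_const (y := 1 / p)).tendsto _).comp hpow
  rw [← ENNReal.rpow_mul, mul_one_div_cancel hp.ne', ENNReal.rpow_one] at hlim
  refine hlim.congr' ?_
  filter_upwards [Ioo_mem_nhdsLT one_pos] with θ ⟨hθ0, hθ1⟩
  exact (ofReal_rpow_mul_interpNormE N0 N1 f hp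
    (mul_nonneg (mul_nonneg hθ0.le (sub_pos.2 hθ1).le) hp.le)).symm

/-- Limit of normalized interpolation norms as `θ → 1⁻`: for a compatible pair of
quasi-seminormed spaces `(A₀, A₁)`, `p > 0` and `f ∈ A₀ ∩ A₁`,
`lim_{θ→1⁻} (θ(1-θ)p)^{1/p} ‖f‖_{(A₀,A₁)_{θ,p}} = sup_{t>0} K(t,f)/t`. -/
theorem stmt9 {V : Type*} [AddCommGroup V] (N0 N1 : V → ℝ≥0∞)
    (hN00 : N0 0 = 0) (hN10 : N1 0 = 0)
    (hN0neg : ∀ x, N0 (-x) = N0 x) (hN1neg : ∀ x, N1 (-x) = N1 x)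
    (κ : ℝ≥0∞) (hκ : 1 ≤ κ) (hκtop : κ ≠ ⊤)
    (hN0tri : ∀ x y, N0 (x + y) ≤ κ * (N0 x + N0 y))
    (hN1tri : ∀ x y, N1 (x + y) ≤ κ * (N1 x + N1 y))
    (p : ℝ) (hp : 0 < p) (f : V) (hf0 : N0 f ≠ ⊤) (hf1 : N1 f ≠ ⊤) :
    Filter.Tendsto
      (fun θ : ℝ => ENNReal.ofReal ((θ * (1 - θ) * p) ^ (1 / p)) * interpNormE N0 N1 θ p f)
      (nhdsWithin 1 (Set.Iio 1))
      (nhds (⨆ t ∈ Set.Ioi (0 : ℝ), KfunE N0 N1 t f / ENNReal.ofReal t)) :=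
  stmt9_general N0 N1 hN10 p hp f hf0
end

section
/- Limit of normalized interpolation norms at θ → 0⁺: let p > 0 and f ∈ A₀ ∩ A₁. Then lim_{θ→0⁺} (θ(1-θ)p)^{1/p} (∫₀^∞ (t^{-θ}K(t,f))^p dt/t)^{1/p} = sup_{t>0} K(t,f). -/
open scoped ENNReal

/-!
Put `K(t) = K(t, f)` and `S = sup_{t>0} K(t)`. The `p`-th power of the normalized norm is
`θ(1-θ)p ∫₀^∞ t^{-θp-1} K(t)^p dt`. Since `K` is nondecreasing, integrating only over `t > T`
bounds it below by `(1-θ) T^{-θp} K(T)^p` for every `T > 0`; using `K(t) ≤ t N1(f)` on `(0, 1]`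
and `K ≤ S` on `(1, ∞)` bounds it above by `θ N1(f)^p + (1-θ) S^p`. As `θ → 0⁺` these bounds
tend to `K(T)^p` and `S^p`.
-/

open MeasureTheory Set Filter Topology

lemma lintegral_Ioi_ofReal_rpow {a c : ℝ} (ha : a < 0) (hc : 0 < c) :
    ∫⁻ t in Ioi c, ENNReal.ofReal (t ^ (a - 1)) = ENNReal.ofReal (c ^ a / -a) := by
  rw [← ofReal_integral_eq_lintegral_ofReal (integrableOn_Ioi_rpow_of_lt (by linarith) hc)
    (by filter_upwards [ae_restrict_mem measurableSet_Ioi] with t ht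
        exact Real.rpow_nonneg (hc.trans ht).le _),
    integral_Ioi_rpow_of_lt (by linarith) hc, sub_add_cancel, neg_div, div_neg]

lemma lintegral_Ioc_zero_ofReal_rpow {b c : ℝ} (hb : 0 < b) (hc : 0 < c) :
    ∫⁻ t in Ioc 0 c, ENNReal.ofReal (t ^ (b - 1)) = ENNReal.ofReal (c ^ b / b) := by
  have hint : IntegrableOn (fun t : ℝ => t ^ (b - 1)) (Ioc 0 c) :=
    (intervalIntegrable_iff_integrableOn_Ioc_of_le hc.le).mp
      (intervalIntegral.intervalIntegrable_rpow' (by linarith))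
  rw [← ofReal_integral_eq_lintegral_ofReal hint
    (by filter_upwards [ae_restrict_mem measurableSet_Ioc] with t ht
        exact Real.rpow_nonneg ht.1.le _),
    ← intervalIntegral.integral_of_le hc.le, integral_rpow (Or.inl (by linarith)),
    sub_add_cancel, Real.zero_rpow hb.ne', sub_zero]

section
variable {K : ℝ → ℝ≥0∞} {p : ℝ}

lemma lintegral_rpow_div_eq_lintegral_ofReal_rpow_mul (hp : 0 ≤ p) (θ : ℝ) :
    ∫⁻ t in Ioi 0, (ENNReal.ofReal (t ^ (-θ)) * K t) ^ p / ENNReal.ofReal t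
      = ∫⁻ t in Ioi 0, ENNReal.ofReal (t ^ (-θ * p - 1)) * K t ^ p := by
  refine setLIntegral_congr_fun measurableSet_Ioi fun t (ht : 0 < t) => ?_
  rw [ENNReal.mul_rpow_of_nonneg _ _ hp, ENNReal.ofReal_rpow_of_pos (Real.rpow_pos_of_pos ht _),
    ← Real.rpow_mul ht.le, sub_eq_add_neg, Real.rpow_add ht, Real.rpow_neg_one,
    ENNReal.ofReal_mul (Real.rpow_nonneg ht.le _), ENNReal.ofReal_inv_of_pos ht,
    div_eq_mul_inv, neg_mul]
  ring

lemma ofReal_div_mul_le_lintegral (hK : Monotone K) (hp : 0 ≤ p) {a T : ℝ} (ha : 0 < a)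
    (hT : 0 < T) :
    ENNReal.ofReal (T ^ (-a) / a) * K T ^ p
      ≤ ∫⁻ t in Ioi 0, ENNReal.ofReal (t ^ (-a - 1)) * K t ^ p :=
  calc ENNReal.ofReal (T ^ (-a) / a) * K T ^ p
      = ∫⁻ t in Ioi T, ENNReal.ofReal (t ^ (-a - 1)) * K T ^ p := by
        rw [lintegral_mul_const _ (by fun_prop), lintegral_Ioi_ofReal_rpow (by linarith) hT,
          neg_neg]
    _ ≤ ∫⁻ t in Ioi T, ENNReal.ofReal (t ^ (-a - 1)) * K t ^ p :=
        setLIntegral_mono' measurableSet_Ioi fun t ht =>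
          mul_le_mul_right (ENNReal.rpow_le_rpow (hK (le_of_lt ht)) hp) _
    _ ≤ _ := lintegral_mono_set (Ioi_subset_Ioi hT.le)

lemma lintegral_le_of_le_ofReal_mul {B S : ℝ≥0∞} (hp : 0 ≤ p)
    (hKB : ∀ t, K t ≤ ENNReal.ofReal t * B) (hKS : ∀ t, 0 < t → K t ≤ S) {a : ℝ} (ha : 0 < a)
    (hap : a < p) :
    ∫⁻ t in Ioi 0, ENNReal.ofReal (t ^ (-a - 1)) * K t ^ p
      ≤ ENNReal.ofReal (1 / (p - a)) * B ^ p + ENNReal.ofReal (1 / a) * S ^ p := by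
  have head : ∫⁻ t in Ioc 0 1, ENNReal.ofReal (t ^ (-a - 1)) * K t ^ p
      ≤ ENNReal.ofReal (1 / (p - a)) * B ^ p :=
    calc ∫⁻ t in Ioc 0 1, ENNReal.ofReal (t ^ (-a - 1)) * K t ^ p
        ≤ ∫⁻ t in Ioc 0 1, ENNReal.ofReal (t ^ (p - a - 1)) * B ^ p := by
          refine setLIntegral_mono' measurableSet_Ioc fun t ⟨(ht : 0 < t), _⟩ => ?_
          calc ENNReal.ofReal (t ^ (-a - 1)) * K t ^ p
              ≤ ENNReal.ofReal (t ^ (-a - 1)) * (ENNReal.ofReal t * B) ^ p :=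
                mul_le_mul_right (ENNReal.rpow_le_rpow (hKB t) hp) _
            _ = ENNReal.ofReal (t ^ (p - a - 1)) * B ^ p := by
                rw [ENNReal.mul_rpow_of_nonneg _ _ hp, ENNReal.ofReal_rpow_of_pos ht, ← mul_assoc,
                  ← ENNReal.ofReal_mul (Real.rpow_nonneg ht.le _), ← Real.rpow_add ht]
                ring_nf
      _ = _ := by
          rw [lintegral_mul_const _ (by fun_prop),
            lintegral_Ioc_zero_ofReal_rpow (by linarith) one_pos, Real.one_rpow]
  have tail : ∫⁻ t in Ioi 1, ENNReal.ofReal (t ^ (-a - 1)) * K t ^ p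
      ≤ ENNReal.ofReal (1 / a) * S ^ p :=
    calc ∫⁻ t in Ioi 1, ENNReal.ofReal (t ^ (-a - 1)) * K t ^ p
        ≤ ∫⁻ t in Ioi 1, ENNReal.ofReal (t ^ (-a - 1)) * S ^ p :=
          setLIntegral_mono' measurableSet_Ioi fun t ht =>
            mul_le_mul_right (ENNReal.rpow_le_rpow (hKS t (one_pos.trans ht)) hp) _
      _ = _ := by
          rw [lintegral_mul_const _ (by fun_prop),
            lintegral_Ioi_ofReal_rpow (by linarith) one_pos, Real.one_rpow, neg_neg]
  rw [← Ioc_union_Ioi_eq_Ioi zero_le_one]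
  exact (lintegral_union_le _ _ _).trans (add_le_add head tail)

lemma ofReal_mul_rpow_le_ofReal_mul_lintegral (hK : Monotone K) (hp : 0 < p) {θ T : ℝ}
    (hθ : θ ∈ Ioo 0 1) (hT : 0 < T) :
    ENNReal.ofReal ((1 - θ) * T ^ (-(θ * p))) * K T ^ p
      ≤ ENNReal.ofReal (θ * (1 - θ) * p) *
        ∫⁻ t in Ioi 0, ENNReal.ofReal (t ^ (-θ * p - 1)) * K t ^ p := by
  obtain ⟨h0, h1⟩ := hθ
  have hA : 0 ≤ θ * (1 - θ) * p := by have := sub_pos.2 h1; positivity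
  calc ENNReal.ofReal ((1 - θ) * T ^ (-(θ * p))) * K T ^ p
      = ENNReal.ofReal (θ * (1 - θ) * p) *
        (ENNReal.ofReal (T ^ (-(θ * p)) / (θ * p)) * K T ^ p) := by
        rw [← mul_assoc, ← ENNReal.ofReal_mul hA]
        congr 2
        field_simp
    _ ≤ _ := by
        rw [neg_mul]
        exact mul_le_mul_right (ofReal_div_mul_le_lintegral hK hp.le (by positivity) hT) _

lemma ofReal_mul_lintegral_le {B : ℝ≥0∞} (hKB : ∀ t, K t ≤ ENNReal.ofReal t * B) (hp : 0 < p)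
    {θ : ℝ} (hθ : θ ∈ Ioo 0 1) :
    ENNReal.ofReal (θ * (1 - θ) * p) *
        ∫⁻ t in Ioi 0, ENNReal.ofReal (t ^ (-θ * p - 1)) * K t ^ p
      ≤ ENNReal.ofReal θ * B ^ p + ENNReal.ofReal (1 - θ) * (⨆ t ∈ Ioi (0 : ℝ), K t) ^ p := by
  obtain ⟨h0, h1⟩ := hθ
  have hA : 0 ≤ θ * (1 - θ) * p := by have := sub_pos.2 h1; positivity
  have hKS (t : ℝ) (ht : 0 < t) : K t ≤ ⨆ t ∈ Ioi (0 : ℝ), K t :=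
    le_iSup₂ (f := fun t (_ : t ∈ Ioi 0) => K t) t ht
  calc _ ≤ ENNReal.ofReal (θ * (1 - θ) * p) *
        (ENNReal.ofReal (1 / (p - θ * p)) * B ^ p +
          ENNReal.ofReal (1 / (θ * p)) * (⨆ t ∈ Ioi (0 : ℝ), K t) ^ p) := by
        rw [neg_mul]
        exact mul_le_mul_right
          (lintegral_le_of_le_ofReal_mul hp.le hKB hKS (by positivity) (by nlinarith)) _
    _ = _ := by
        rw [mul_add, ← mul_assoc, ← mul_assoc, ← ENNReal.ofReal_mul hA, ← ENNReal.ofReal_mul hA]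
        congr 4 <;> field_simp

theorem tendsto_ofReal_mul_lintegral_rpow (hK : Monotone K) {B : ℝ≥0∞} (hB : B ≠ ⊤)
    (hKB : ∀ t, K t ≤ ENNReal.ofReal t * B) (hp : 0 < p) :
    Tendsto (fun θ => ENNReal.ofReal (θ * (1 - θ) * p) *
        ∫⁻ t in Ioi 0, ENNReal.ofReal (t ^ (-θ * p - 1)) * K t ^ p)
      (𝓝[>] 0) (𝓝 ((⨆ t ∈ Ioi (0 : ℝ), K t) ^ p)) := by
  have hθ : ∀ᶠ θ in 𝓝[>] (0 : ℝ), θ ∈ Ioo 0 1 := Ioo_mem_nhdsGT one_pos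
  have hθ0 : Tendsto (fun θ : ℝ => θ) (𝓝[>] 0) (𝓝 0) :=
    tendsto_nhdsWithin_of_tendsto_nhds tendsto_id
  refine tendsto_of_le_liminf_of_limsup_le ?_ ?_
  · refine (ENNReal.le_rpow_inv_iff hp).1 <| iSup₂_le fun T (hT : 0 < T) => ?_
    refine (ENNReal.le_rpow_inv_iff hp).2 ?_
    have hc : Continuous fun θ : ℝ => (1 - θ) * T ^ (-(θ * p)) := by
      fun_prop (disch := positivity)
    have lim : Tendsto (fun θ => ENNReal.ofReal ((1 - θ) * T ^ (-(θ * p))) * K T ^ p)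
        (𝓝[>] 0) (𝓝 (K T ^ p)) := by
      simpa using ENNReal.Tendsto.mul_const (ENNReal.tendsto_ofReal
        ((hc.tendsto 0).mono_left nhdsWithin_le_nhds)) (b := K T ^ p) (Or.inl (by simp))
    exact lim.liminf_eq.symm.le.trans <| liminf_le_liminf <| hθ.mono fun θ hθ =>
      ofReal_mul_rpow_le_ofReal_mul_lintegral hK hp hθ hT
  · have h1 : Tendsto (fun θ : ℝ => 1 - θ) (𝓝[>] 0) (𝓝 1) := by
      simpa using tendsto_const_nhds.sub hθ0
    have lim : Tendsto (fun θ => ENNReal.ofReal θ * B ^ p +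
        ENNReal.ofReal (1 - θ) * (⨆ t ∈ Ioi (0 : ℝ), K t) ^ p)
        (𝓝[>] 0) (𝓝 ((⨆ t ∈ Ioi (0 : ℝ), K t) ^ p)) := by
      simpa using (ENNReal.Tendsto.mul_const (ENNReal.tendsto_ofReal hθ0)
        (Or.inr (ENNReal.rpow_ne_top_of_nonneg hp.le hB))).add
        (ENNReal.Tendsto.mul_const (ENNReal.tendsto_ofReal h1) (Or.inl (by simp)))
    exact (limsup_le_limsup <| hθ.mono fun θ hθ => ofReal_mul_lintegral_le hKB hp hθ).trans
      lim.limsup_eq.le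

theorem tendsto_ofReal_rpow_mul_lintegral_rpow_div (hK : Monotone K) {B : ℝ≥0∞} (hB : B ≠ ⊤)
    (hKB : ∀ t, K t ≤ ENNReal.ofReal t * B) (hp : 0 < p) :
    Tendsto (fun θ => ENNReal.ofReal ((θ * (1 - θ) * p) ^ (1 / p)) *
        (∫⁻ t in Ioi 0, (ENNReal.ofReal (t ^ (-θ)) * K t) ^ p / ENNReal.ofReal t) ^ (1 / p))
      (𝓝[>] 0) (𝓝 (⨆ t ∈ Ioi (0 : ℝ), K t)) := by
  have h := ((ENNReal.continuous_rpow_const (y := 1 / p)).tendsto _).comp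
    (tendsto_ofReal_mul_lintegral_rpow hK hB hKB hp)
  rw [one_div, ENNReal.rpow_rpow_inv hp.ne', ← one_div] at h
  refine h.congr' ?_
  filter_upwards [Ioo_mem_nhdsGT one_pos] with θ ⟨h0, h1⟩
  have hA : 0 ≤ θ * (1 - θ) * p := by have := sub_pos.2 h1; positivity
  rw [Function.comp_apply, ENNReal.mul_rpow_of_nonneg _ _ (by positivity),
    ENNReal.ofReal_rpow_of_nonneg hA (by positivity),
    lintegral_rpow_div_eq_lintegral_ofReal_rpow_mul hp.le]

end

section
variable {V : Type*} [AddCommGroup V]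

lemma KfunE_mono (N0 N1 : V → ℝ≥0∞) (f : V) : Monotone fun t => KfunE N0 N1 t f :=
  fun _ _ hst => iInf₂_mono fun _ _ => iInf_mono fun _ => by gcongr

lemma KfunE_le_ofReal_mul {N0 : V → ℝ≥0∞} (N1 : V → ℝ≥0∞) (hN00 : N0 0 = 0) (t : ℝ) (f : V) :
    KfunE N0 N1 t f ≤ ENNReal.ofReal t * N1 f :=
  calc KfunE N0 N1 t f ≤ N0 0 + ENNReal.ofReal t * N1 f :=
        iInf₂_le_of_le 0 f (iInf_le_of_le (zero_add f).symm le_rfl)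
    _ = ENNReal.ofReal t * N1 f := by rw [hN00, zero_add]

end

theorem stmt10_general {V : Type*} [AddCommGroup V] (N0 N1 : V → ℝ≥0∞)
    (hN00 : N0 0 = 0)
    (p : ℝ) (hp : 0 < p) (f : V) (hf1 : N1 f ≠ ⊤) :
    Filter.Tendsto
      (fun θ : ℝ => ENNReal.ofReal ((θ * (1 - θ) * p) ^ (1 / p)) * interpNormE N0 N1 θ p f)
      (nhdsWithin 0 (Set.Ioi 0))
      (nhds (⨆ t ∈ Set.Ioi (0 : ℝ), KfunE N0 N1 t f)) :=
  tendsto_ofReal_rpow_mul_lintegral_rpow_div (KfunE_mono N0 N1 f) hf1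
    (fun t => KfunE_le_ofReal_mul N1 hN00 t f) hp

/-- Limit of normalized interpolation norms as `θ → 0⁺`: for a compatible pair of
quasi-seminormed spaces `(A₀, A₁)`, `p > 0` and `f ∈ A₀ ∩ A₁`,
`lim_{θ→0⁺} (θ(1-θ)p)^{1/p} ‖f‖_{(A₀,A₁)_{θ,p}} = sup_{t>0} K(t,f)`. -/
theorem stmt10 {V : Type*} [AddCommGroup V] (N0 N1 : V → ℝ≥0∞)
    (hN00 : N0 0 = 0) (hN10 : N1 0 = 0)
    (hN0neg : ∀ x, N0 (-x) = N0 x) (hN1neg : ∀ x, N1 (-x) = N1 x)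
    (κ : ℝ≥0∞) (hκ : 1 ≤ κ) (hκtop : κ ≠ ⊤)
    (hN0tri : ∀ x y, N0 (x + y) ≤ κ * (N0 x + N0 y))
    (hN1tri : ∀ x y, N1 (x + y) ≤ κ * (N1 x + N1 y))
    (p : ℝ) (hp : 0 < p) (f : V) (hf0 : N0 f ≠ ⊤) (hf1 : N1 f ≠ ⊤) :
    Filter.Tendsto
      (fun θ : ℝ => ENNReal.ofReal ((θ * (1 - θ) * p) ^ (1 / p)) * interpNormE N0 N1 θ p f)
      (nhdsWithin 0 (Set.Ioi 0))
      (nhds (⨆ t ∈ Set.Ioi (0 : ℝ), KfunE N0 N1 t f)) :=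
  stmt10_general N0 N1 hN00 p hp f hf1
end

section
/- Lower bound showing blow-up of Butzer seminorms in the counterexample: let p ∈ (1,∞), t ∈ (0,1), and suppose K : ℕ₀ → ℝ satisfies K(l) ≥ c · 2^{-lt}(1+l)^{1/p} for all l ∈ ℕ₀ with c > 0. Then for s ∈ (0,t), Σ_{l=0}^∞ 2^{l s p} K(l)^p ≥ c' (t-s)^{-2}, where c' > 0 depends only on p, t, c. Hence (t-s)^{1/p} (Σ_l 2^{lsp} K(l)^p)^{1/p} ≥ c'' (t-s)^{-1/p} → ∞ as s ↑ t. -/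
/-!
With `x = 2^{-(t-s)p}`, the hypothesis on `K` gives `2^{lsp} K(l)^p ≥ c^p (l+1) x^l`,
and `Σ (l+1) x^l = (1-x)^{-2}`. Since `1 - x ≤ (t-s) p log 2` (from `1 - y ≤ e^{-y}`), the
series is at least `c^p (p log 2)^{-2} (t-s)^{-2}`; taking `p`-th roots gives the second bound.
-/

open scoped ENNReal

theorem one_sub_rpow_neg_le {b : ℝ} (hb : 0 < b) (y : ℝ) : 1 - b ^ (-y) ≤ y * Real.log b := by
  rw [Real.rpow_def_of_pos hb, mul_neg, mul_comm]
  linarith [Real.one_sub_le_exp_neg (y * Real.log b)]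

theorem ofReal_div_one_sub_sq_le_tsum {a r : ℝ} {f : ℕ → ℝ} (ha : 0 ≤ a) (hr₀ : 0 ≤ r)
    (hr₁ : r < 1) (hf : ∀ n : ℕ, a * ((n + 1) * r ^ n) ≤ f n) :
    ENNReal.ofReal (a / (1 - r) ^ 2) ≤ ∑' n, ENNReal.ofReal (f n) := by
  have hsum : HasSum (fun n : ℕ => a * ((n + 1) * r ^ n)) (a / (1 - r) ^ 2) := by
    have hr : ‖r‖ < 1 := by rwa [Real.norm_of_nonneg hr₀]
    simpa [div_eq_mul_inv] using (hasSum_choose_mul_geometric_of_norm_lt_one 1 hr).mul_left a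
  calc ENNReal.ofReal (a / (1 - r) ^ 2)
      = ∑' n : ℕ, ENNReal.ofReal (a * ((n + 1) * r ^ n)) := by
        rw [← hsum.tsum_eq, ENNReal.ofReal_tsum_of_nonneg (fun n => by positivity) hsum.summable]
    _ ≤ ∑' n, ENNReal.ofReal (f n) :=
        ENNReal.tsum_le_tsum fun n => ENNReal.ofReal_le_ofReal (hf n)

theorem mul_geometric_le_of_le {p t s c k : ℝ} (l : ℕ) (hp : 0 < p) (hc : 0 ≤ c)
    (hk : c * (2 : ℝ) ^ (-(l : ℝ) * t) * (1 + (l : ℝ)) ^ (1 / p) ≤ k) :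
    c ^ p * ((l + 1) * ((2 : ℝ) ^ (-((t - s) * p))) ^ l) ≤
      (2 : ℝ) ^ ((l : ℝ) * s * p) * k ^ p := by
  have hpow : (c * (2 : ℝ) ^ (-(l : ℝ) * t) * (1 + (l : ℝ)) ^ (1 / p)) ^ p
      = c ^ p * (2 : ℝ) ^ (-(l : ℝ) * t * p) * (l + 1) := by
    rw [Real.mul_rpow (by positivity) (by positivity), Real.mul_rpow hc (by positivity),
      ← Real.rpow_mul (by positivity), ← Real.rpow_mul (by positivity),
      one_div_mul_cancel hp.ne', Real.rpow_one, add_comm]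
  have hgeom : (2 : ℝ) ^ ((l : ℝ) * s * p) * (2 : ℝ) ^ (-(l : ℝ) * t * p)
      = ((2 : ℝ) ^ (-((t - s) * p))) ^ l := by
    rw [← Real.rpow_natCast, ← Real.rpow_mul (by norm_num), ← Real.rpow_add (by norm_num)]
    ring_nf
  calc c ^ p * ((l + 1) * ((2 : ℝ) ^ (-((t - s) * p))) ^ l)
      = (2 : ℝ) ^ ((l : ℝ) * s * p) *
          (c * (2 : ℝ) ^ (-(l : ℝ) * t) * (1 + (l : ℝ)) ^ (1 / p)) ^ p := by
        rw [hpow, ← hgeom]; ring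
    _ ≤ (2 : ℝ) ^ ((l : ℝ) * s * p) * k ^ p := by gcongr

theorem ofReal_rpow_neg_two_le_tsum {p t s c : ℝ} {K : ℕ → ℝ} (hp : 0 < p) (hc : 0 ≤ c)
    (hst : s < t)
    (hK : ∀ l : ℕ, c * (2 : ℝ) ^ (-(l : ℝ) * t) * (1 + (l : ℝ)) ^ (1 / p) ≤ K l) :
    ENNReal.ofReal (c ^ p / (p * Real.log 2) ^ 2 * (t - s) ^ (-2 : ℝ)) ≤
      ∑' l : ℕ, ENNReal.ofReal ((2 : ℝ) ^ ((l : ℝ) * s * p) * K l ^ p) := by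
  set x : ℝ := (2 : ℝ) ^ (-((t - s) * p))
  have hts : 0 < t - s := sub_pos.mpr hst
  have hx₁ : x < 1 := Real.rpow_lt_one_of_one_lt_of_neg (by norm_num) (by nlinarith)
  have hgap : 1 - x ≤ (t - s) * p * Real.log 2 := one_sub_rpow_neg_le (by norm_num) _
  refine le_trans (ENNReal.ofReal_le_ofReal ?_)
    (ofReal_div_one_sub_sq_le_tsum (Real.rpow_nonneg hc p) (by positivity) hx₁
      fun l => mul_geometric_le_of_le l hp hc (hK l))
  calc c ^ p / (p * Real.log 2) ^ 2 * (t - s) ^ (-2 : ℝ)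
      = c ^ p / ((t - s) * p * Real.log 2) ^ 2 := by
        rw [Real.rpow_neg hts.le, Real.rpow_two]; field_simp
    _ ≤ c ^ p / (1 - x) ^ 2 := by gcongr

theorem ofReal_rpow_mul_rpow_neg_le {a u p : ℝ} {S : ℝ≥0∞} (ha : 0 ≤ a) (hu : 0 < u)
    (hp : 0 < p) (h : ENNReal.ofReal (a * u ^ (-2 : ℝ)) ≤ S) :
    ENNReal.ofReal (a ^ (1 / p) * u ^ (-(1 / p))) ≤
      ENNReal.ofReal (u ^ (1 / p)) * S ^ (1 / p) := by
  have hroot : ENNReal.ofReal ((a * u ^ (-2 : ℝ)) ^ (1 / p)) ≤ S ^ (1 / p) := by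
    rw [← ENNReal.ofReal_rpow_of_nonneg (by positivity) (by positivity)]
    gcongr
  calc ENNReal.ofReal (a ^ (1 / p) * u ^ (-(1 / p)))
      = ENNReal.ofReal (u ^ (1 / p) * (a * u ^ (-2 : ℝ)) ^ (1 / p)) := by
        rw [Real.mul_rpow ha (by positivity), ← Real.rpow_mul hu.le, mul_left_comm,
          ← Real.rpow_add hu]
        ring_nf
    _ ≤ ENNReal.ofReal (u ^ (1 / p)) * S ^ (1 / p) := by
        rw [ENNReal.ofReal_mul (by positivity)]
        gcongr

theorem stmt14_general (p t c : ℝ) (hp : 1 < p) (hc : 0 < c) :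
    ∃ c' : ℝ, 0 < c' ∧ ∃ c'' : ℝ, 0 < c'' ∧
      ∀ K : ℕ → ℝ,
        (∀ l : ℕ, c * (2 : ℝ) ^ (-(l : ℝ) * t) * (1 + (l : ℝ)) ^ (1 / p) ≤ K l) →
        ∀ s ∈ Set.Ioo (0 : ℝ) t,
          ENNReal.ofReal (c' * (t - s) ^ (-2 : ℝ)) ≤
              (∑' l : ℕ, ENNReal.ofReal ((2 : ℝ) ^ ((l : ℝ) * s * p) * K l ^ p)) ∧
            ENNReal.ofReal (c'' * (t - s) ^ (-(1 / p))) ≤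
              ENNReal.ofReal ((t - s) ^ (1 / p)) *
                (∑' l : ℕ, ENNReal.ofReal ((2 : ℝ) ^ ((l : ℝ) * s * p) * K l ^ p)) ^ (1 / p) := by
  have hp₀ : 0 < p := one_pos.trans hp
  have hc' : 0 < c ^ p / (p * Real.log 2) ^ 2 := by
    have := Real.log_pos one_lt_two
    positivity
  refine ⟨_, hc', _, Real.rpow_pos_of_pos hc' (1 / p), fun K hK s ⟨_, hst⟩ => ?_⟩
  have hsum := ofReal_rpow_neg_two_le_tsum hp₀ hc.le hst hK
  exact ⟨hsum, ofReal_rpow_mul_rpow_neg_le hc'.le (sub_pos.mpr hst) hp₀ hsum⟩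

/-- Lower bound showing blow-up of Butzer seminorms in the counterexample: let `p ∈ (1,∞)`,
`t ∈ (0,1)`, `c > 0`. There are `c', c'' > 0` (depending only on `p, t, c`) such that for
every `K : ℕ → ℝ` with `K(l) ≥ c 2^{-lt}(1+l)^{1/p}` and every `s ∈ (0,t)`:
`Σ_l 2^{lsp} K(l)^p ≥ c' (t-s)^{-2}`, hence
`(t-s)^{1/p} (Σ_l 2^{lsp} K(l)^p)^{1/p} ≥ c'' (t-s)^{-1/p}`. -/
theorem stmt14 (p t c : ℝ) (hp : 1 < p) (ht : t ∈ Set.Ioo (0 : ℝ) 1) (hc : 0 < c) :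
    ∃ c' : ℝ, 0 < c' ∧ ∃ c'' : ℝ, 0 < c'' ∧
      ∀ K : ℕ → ℝ,
        (∀ l : ℕ, c * (2 : ℝ) ^ (-(l : ℝ) * t) * (1 + (l : ℝ)) ^ (1 / p) ≤ K l) →
        ∀ s ∈ Set.Ioo (0 : ℝ) t,
          ENNReal.ofReal (c' * (t - s) ^ (-2 : ℝ)) ≤
              (∑' l : ℕ, ENNReal.ofReal ((2 : ℝ) ^ ((l : ℝ) * s * p) * K l ^ p)) ∧
            ENNReal.ofReal (c'' * (t - s) ^ (-(1 / p))) ≤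
              ENNReal.ofReal ((t - s) ^ (1 / p)) *
                (∑' l : ℕ, ENNReal.ofReal ((2 : ℝ) ^ ((l : ℝ) * s * p) * K l ^ p)) ^ (1 / p) :=
  stmt14_general p t c hp hc
end
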